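/- arXiv:2104.11198 — 8 statements merged into one kernel-verified Lean document; each statement's English description precedes it below -/
import Mathlib

section
/- Every simple, connected graph G=(V,E) admits a partition V = A ∪ B ∪ C such that: every vertex a ∈ A satisfies d_B(a) ≥ d_A(a) + max{1, d_C(a)}, every vertex b ∈ B satisfies d_A(b) ≥ d_B(b) + max{1, d_C(b)}, no two vertices of C are adjacent, and every vertex c ∈ C satisfies d_A(c) = d_B(c). -/
open Finset

variable {V : Type*} [Fintype V] [DecidableEq V]

/-- Number of neighbors of `v` lying in `S`. -/
def degIn (G : SimpleGraph V) [DecidableRel G.Adj] (v : V) (S : Finset V) : ℕ :=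
  (S.filter (G.Adj v)).card

/-- Number of edges with one endpoint in `X` and the other in `Y`
(each edge counted once; for `X = Y` this is the number of edges inside `X`). -/
def eBtw (G : SimpleGraph V) [DecidableRel G.Adj] (X Y : Finset V) : ℕ :=
  (G.edgeFinset.filter (fun e => ∃ x ∈ X, ∃ y ∈ Y, e = s(x, y))).card

/-!
Label the vertices by `Fin 3` (`0, 1, 2` for `A, B, C`) and weigh a labelling by its edges:
`+1` for an `A`–`B` edge, `-1` for an edge inside `A`, inside `B` or inside `C`, `0` otherwise.
Take a labelling of maximal weight and, among those, with `C` as large as possible.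

Moving a `C`-vertex to `A` or to `B` does not increase the weight, which forces `d_A = d_B` and
`d_C = 0` on `C`; in particular `C` is independent. Moving an `A`-vertex `v` to `C` enlarges `C`,
so it must strictly decrease the weight: `d_A(v) + 1 ≤ d_B(v) + d_C(v)`. Relabelling the
`C`-neighbours of `v` by `A` keeps the weight (they are balanced and pairwise non-adjacent), and
moving `v` to `C` afterwards gives `d_A(v) + d_C(v) ≤ d_B(v)`. Together these are
`d_A(v) + max 1 (d_C(v)) ≤ d_B(v)`; `B` is symmetric.
-/

section Labelings

variable {ι α : Type*} [Fintype ι] [DecidableEq α]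

def labelSet (ℓ : ι → α) (i : α) : Finset ι := univ.filter (ℓ · = i)

@[simp]
theorem mem_labelSet {ℓ : ι → α} {i : α} {x : ι} :
    x ∈ labelSet ℓ i ↔ ℓ x = i := by
  simp [labelSet]

theorem disjoint_labelSet (ℓ : ι → α) {i j : α} (hij : i ≠ j) :
    Disjoint (labelSet ℓ i) (labelSet ℓ j) :=
  disjoint_filter.2 fun _ _ hi hj => hij (hi.symm.trans hj)

end Labelings

namespace SimpleGraph

variable {α : Type*} (G : SimpleGraph V) [DecidableRel G.Adj]

def labelPotential (w : α → α → ℤ) (ℓ : V → α) : ℤ :=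
  ∑ u, ∑ x ∈ G.neighborFinset u, w (ℓ u) (ℓ x)

omit [DecidableEq V] in
theorem sum_neighborFinset_comp [Fintype α] [DecidableEq α] (ℓ : V → α) (f : α → ℤ) (v : V) :
    ∑ x ∈ G.neighborFinset v, f (ℓ x) = ∑ i, (degIn G v (labelSet ℓ i) : ℤ) * f i := by
  rw [← sum_fiberwise' (G.neighborFinset v) ℓ f]
  refine sum_congr rfl fun i _ => ?_
  rw [sum_const, nsmul_eq_mul]
  congr 3
  ext x
  simp [labelSet, and_comm]

theorem labelPotential_piecewise {w : α → α → ℤ} (hw : ∀ s t, w s t = w t s)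
    (σ ℓ : V → α) {S : Finset V} (hS : G.IsIndepSet S) :
    G.labelPotential w (S.piecewise σ ℓ) = G.labelPotential w ℓ +
      2 * ∑ u ∈ S, ∑ x ∈ G.neighborFinset u, (w (σ u) (ℓ x) - w (ℓ u) (ℓ x)) := by
  set m := S.piecewise σ ℓ
  set g : V → V → ℤ := fun u x => if G.Adj u x then w (m u) (m x) - w (ℓ u) (ℓ x) else 0
  have hdiff : G.labelPotential w m - G.labelPotential w ℓ = ∑ u, ∑ x, g u x := by
    simp only [labelPotential, neighborFinset_eq_filter, sum_filter, ← sum_sub_distrib]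
    refine sum_congr rfl fun u _ => sum_congr rfl fun x _ => ?_
    by_cases h : G.Adj u x <;> simp [g, h]
  -- an edge inside `S` cannot exist, and an edge missing `S` does not change its weight
  have hsplit : ∀ u x, g u x = (if u ∈ S then g u x else 0) + (if x ∈ S then g u x else 0) := by
    intro u x
    by_cases hu : u ∈ S <;> by_cases hx : x ∈ S
    · have : ¬ G.Adj u x := fun h => hS hu hx h.ne h
      simp [g, this]
    all_goals simp [g, m, hu, hx]
  have hsymm : ∀ u x, g u x = g x u := by
    intro u x; simp only [g, G.adj_comm u x, hw (m u), hw (ℓ u)]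
  have hrow : ∀ u ∈ S, ∑ x, g u x = ∑ x ∈ G.neighborFinset u, (w (σ u) (ℓ x) - w (ℓ u) (ℓ x)) := by
    intro u hu
    rw [neighborFinset_eq_filter, sum_filter]
    refine sum_congr rfl fun x _ => ?_
    by_cases hx : G.Adj u x
    · have hxS : x ∉ S := fun hxS => hS hu hxS hx.ne hx
      simp [g, m, hx, hu, hxS]
    · simp [g, hx]
  have hsum : ∑ u, ∑ x, g u x = 2 * ∑ u ∈ S, ∑ x, g u x := by
    rw [sum_congr rfl fun u _ => sum_congr rfl fun x _ => hsplit u x]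
    simp only [sum_add_distrib, sum_ite_irrel, sum_const_zero, sum_ite_mem, univ_inter]
    rw [sum_comm (s := univ)]
    simp only [hsymm]
    ring
  rw [← sum_congr rfl hrow]
  linarith

theorem labelPotential_update {w : α → α → ℤ} (hw : ∀ s t, w s t = w t s)
    (ℓ : V → α) (v : V) (t : α) :
    G.labelPotential w (Function.update ℓ v t) =
      G.labelPotential w ℓ + 2 * ∑ x ∈ G.neighborFinset v, (w t (ℓ x) - w (ℓ v) (ℓ x)) := by
  rw [← piecewise_singleton (fun _ => t), labelPotential_piecewise G hw _ _ (by simp),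
    sum_singleton]

def abcWeight : Fin 3 → Fin 3 → ℤ := ![![-1, 1, 0], ![1, -1, 0], ![0, 0, -1]]

theorem abcWeight_symm : ∀ s t, abcWeight s t = abcWeight t s := by decide

theorem labelPotential_abcWeight_update (ℓ : V → Fin 3) (v : V) (t : Fin 3) :
    G.labelPotential abcWeight (Function.update ℓ v t) = G.labelPotential abcWeight ℓ +
      2 * ∑ i, (degIn G v (labelSet ℓ i) : ℤ) * (abcWeight t i - abcWeight (ℓ v) i) := by
  rw [labelPotential_update G abcWeight_symm, sum_neighborFinset_comp G ℓ (fun i => _ - _)]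

def IsABCOptimal (ℓ : V → Fin 3) : Prop :=
  ∀ m, toLex (G.labelPotential abcWeight m, #(labelSet m 2)) ≤
    toLex (G.labelPotential abcWeight ℓ, #(labelSet ℓ 2))

theorem exists_isABCOptimal : ∃ ℓ, G.IsABCOptimal ℓ := by
  obtain ⟨ℓ, -, h⟩ := exists_max_image univ
    (fun m : V → Fin 3 => toLex (G.labelPotential abcWeight m, #(labelSet m 2))) univ_nonempty
  exact ⟨ℓ, fun m => h m (mem_univ m)⟩

namespace IsABCOptimal

variable {G} {ℓ : V → Fin 3} (h : G.IsABCOptimal ℓ)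
include h

omit [DecidableEq V] in
theorem labelPotential_le (m : V → Fin 3) :
    G.labelPotential abcWeight m ≤ G.labelPotential abcWeight ℓ :=
  (Prod.Lex.toLex_le_toLex'.1 (h m)).1

theorem labelPotential_update_two_lt {v : V} (hv : ℓ v ≠ 2) :
    G.labelPotential abcWeight (Function.update ℓ v 2) < G.labelPotential abcWeight ℓ := by
  obtain ⟨hle, hC⟩ := Prod.Lex.toLex_le_toLex'.1 (h (Function.update ℓ v 2))
  refine hle.lt_of_ne fun heq => ?_
  have hcard : labelSet (Function.update ℓ v 2) 2 = insert v (labelSet ℓ 2) := by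
    ext x
    by_cases hx : x = v <;> simp [hx, Function.update_of_ne]
  have := hC heq
  rw [hcard, card_insert_of_notMem (mt mem_labelSet.1 hv)] at this
  omega

theorem degIn_of_eq_two {v : V} (hv : ℓ v = 2) :
    degIn G v (labelSet ℓ 0) = degIn G v (labelSet ℓ 1) ∧ degIn G v (labelSet ℓ 2) = 0 := by
  have h0 := h.labelPotential_le (Function.update ℓ v 0)
  have h1 := h.labelPotential_le (Function.update ℓ v 1)
  rw [labelPotential_abcWeight_update, Fin.sum_univ_three, hv] at h0 h1
  simp only [abcWeight, Matrix.cons_val] at h0 h1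
  omega

theorem isIndepSet_labelSet_two : G.IsIndepSet (labelSet ℓ 2 : Set V) := by
  intro u hu x hx _ hadj
  have hpos : 0 < degIn G u (labelSet ℓ 2) := card_pos.2 ⟨x, mem_filter.2 ⟨hx, hadj⟩⟩
  have := (h.degIn_of_eq_two (mem_labelSet.1 hu)).2
  omega

theorem degIn_lt_of_ne_two {v : V} {s : Fin 3} (hv : ℓ v ≠ 2) (hs : s ≠ 2) (hvs : ℓ v ≠ s) :
    degIn G v (labelSet ℓ (ℓ v)) < degIn G v (labelSet ℓ s) + degIn G v (labelSet ℓ 2) := by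
  have hmove := h.labelPotential_update_two_lt hv
  rw [labelPotential_abcWeight_update, Fin.sum_univ_three] at hmove
  obtain ⟨ht, rfl⟩ | ⟨ht, rfl⟩ : ℓ v = 0 ∧ s = 1 ∨ ℓ v = 1 ∧ s = 0 := by omega
  all_goals
    simp only [ht, abcWeight, Matrix.cons_val] at hmove ⊢
    omega

theorem degIn_add_le_of_ne_two {v : V} {s : Fin 3} (hv : ℓ v ≠ 2) (hs : s ≠ 2) (hvs : ℓ v ≠ s) :
    degIn G v (labelSet ℓ (ℓ v)) + degIn G v (labelSet ℓ 2) ≤ degIn G v (labelSet ℓ s) := by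
  set T := (G.neighborFinset v).filter (ℓ · = 2)
  have hT : G.IsIndepSet (T : Set V) :=
    h.isIndepSet_labelSet_two.mono (coe_subset.2 fun x hx => mem_labelSet.2 (mem_filter.1 hx).2)
  set m := T.piecewise (fun _ => ℓ v) ℓ
  have hm : G.labelPotential abcWeight m = G.labelPotential abcWeight ℓ := by
    rw [labelPotential_piecewise G abcWeight_symm _ _ hT, add_eq_left, mul_eq_zero]
    refine Or.inr (sum_eq_zero fun u hu => ?_)
    have hu2 : ℓ u = 2 := (mem_filter.1 hu).2
    obtain ⟨h01, h2⟩ := h.degIn_of_eq_two hu2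
    rw [sum_neighborFinset_comp G ℓ (fun i => _ - _), Fin.sum_univ_three, hu2, h01, h2]
    obtain ht | ht : ℓ v = 0 ∨ ℓ v = 1 := by omega
    all_goals simp only [ht, abcWeight, Matrix.cons_val]; ring
  have hmv : m v = ℓ v := piecewise_eq_of_notMem _ _ _ fun hvT => hv (mem_filter.1 hvT).2
  have hmN : ∀ x ∈ G.neighborFinset v, m x = if ℓ x = 2 then ℓ v else ℓ x := by
    intro x hx
    by_cases hx2 : ℓ x = 2
    · simp [m, T, hx, hx2]
    · simp [m, T, hx2]
  have hmove := h.labelPotential_le (Function.update m v 2)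
  rw [labelPotential_update G abcWeight_symm, hm, hmv, sum_congr rfl fun x hx => by rw [hmN x hx],
    sum_neighborFinset_comp G ℓ (fun i => abcWeight 2 (if i = 2 then ℓ v else i) -
      abcWeight (ℓ v) (if i = 2 then ℓ v else i)), Fin.sum_univ_three] at hmove
  obtain ⟨ht, rfl⟩ | ⟨ht, rfl⟩ : ℓ v = 0 ∧ s = 1 ∨ ℓ v = 1 ∧ s = 0 := by omega
  all_goals
    simp only [ht, abcWeight, Matrix.cons_val, Fin.reduceEq, reduceIte] at hmove ⊢
    omega

theorem degIn_add_max_le {v : V} {s : Fin 3} (hv : ℓ v ≠ 2) (hs : s ≠ 2) (hvs : ℓ v ≠ s) :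
    degIn G v (labelSet ℓ (ℓ v)) + max 1 (degIn G v (labelSet ℓ 2)) ≤
      degIn G v (labelSet ℓ s) := by
  have := h.degIn_lt_of_ne_two hv hs hvs
  have := h.degIn_add_le_of_ne_two hv hs hvs
  omega

end IsABCOptimal

end SimpleGraph

theorem decomposition_exists_general (G : SimpleGraph V) [DecidableRel G.Adj] :
    ∃ A B C : Finset V,
      A ∪ B ∪ C = Finset.univ ∧
      Disjoint A B ∧ Disjoint A C ∧ Disjoint B C ∧
      (∀ a ∈ A, degIn G a A + max 1 (degIn G a C) ≤ degIn G a B) ∧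
      (∀ b ∈ B, degIn G b B + max 1 (degIn G b C) ≤ degIn G b A) ∧
      (∀ c ∈ C, ∀ c' ∈ C, ¬ G.Adj c c') ∧
      (∀ c ∈ C, degIn G c A = degIn G c B) := by
  obtain ⟨ℓ, hℓ⟩ := G.exists_isABCOptimal
  refine ⟨labelSet ℓ 0, labelSet ℓ 1, labelSet ℓ 2, ?_, disjoint_labelSet ℓ (by decide),
    disjoint_labelSet ℓ (by decide), disjoint_labelSet ℓ (by decide), ?_, ?_,
    fun c hc c' hc' hadj => hℓ.isIndepSet_labelSet_two hc hc' hadj.ne hadj,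
    fun c hc => (hℓ.degIn_of_eq_two (mem_labelSet.1 hc)).1⟩
  · ext x
    simp only [mem_union, mem_labelSet, mem_univ, iff_true]
    omega
  · intro a ha
    rw [mem_labelSet] at ha
    simpa [ha] using
      hℓ.degIn_add_max_le (v := a) (s := 1) (by simp [ha]) (by decide) (by simp [ha])
  · intro b hb
    rw [mem_labelSet] at hb
    simpa [hb] using
      hℓ.degIn_add_max_le (v := b) (s := 0) (by simp [hb]) (by decide) (by simp [hb])

theorem decomposition_exists (G : SimpleGraph V) [DecidableRel G.Adj]
    (hconn : G.Connected) :
    ∃ A B C : Finset V,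
      A ∪ B ∪ C = Finset.univ ∧
      Disjoint A B ∧ Disjoint A C ∧ Disjoint B C ∧
      (∀ a ∈ A, degIn G a A + max 1 (degIn G a C) ≤ degIn G a B) ∧
      (∀ b ∈ B, degIn G b B + max 1 (degIn G b C) ≤ degIn G b A) ∧
      (∀ c ∈ C, ∀ c' ∈ C, ¬ G.Adj c c') ∧
      (∀ c ∈ C, degIn G c A = degIn G c B) :=
  decomposition_exists_general G
end

section
/- Let G=(V,E) be a finite simple graph in which every vertex has odd degree. Then there exists a partition V = A ∪ B such that every vertex in A has strictly more neighbors in B than in A, and every vertex in B has strictly more neighbors in A than in B. -/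
open Finset

variable {V : Type*} [Fintype V] [DecidableEq V]

lemma degIn_erase_self (G : SimpleGraph V) [DecidableRel G.Adj] (v : V) (S : Finset V) :
    degIn G v (S.erase v) = degIn G v S := by
  unfold degIn
  rw [Finset.filter_erase]
  rw [Finset.erase_eq_of_notMem]
  simp [G.irrefl]

lemma degIn_split (G : SimpleGraph V) [DecidableRel G.Adj] (v a : V) (T : Finset V)
    (ha : a ∈ T) :
    degIn G v T = degIn G v (T.erase a) + (if G.Adj v a then 1 else 0) := by
  unfold degIn
  conv_lhs => rw [← Finset.insert_erase ha]
  rw [Finset.filter_insert]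
  split
  · rw [Finset.card_insert_of_notMem (by simp)]
  · omega

lemma sum_degIn_split (G : SimpleGraph V) [DecidableRel G.Adj] (S T : Finset V) (a : V)
    (ha : a ∈ T) :
    ∑ v ∈ S, degIn G v T
      = (∑ v ∈ S, degIn G v (T.erase a)) + (S.filter (fun v => G.Adj v a)).card := by
  rw [Finset.card_filter, ← Finset.sum_add_distrib]
  exact Finset.sum_congr rfl fun v _ => degIn_split G v a T ha

lemma filter_adj_comm (G : SimpleGraph V) [DecidableRel G.Adj] (S : Finset V) (a : V) :
    (S.filter (fun v => G.Adj v a)).card = degIn G a S := by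
  unfold degIn
  congr 1
  exact Finset.filter_congr fun v _ => by rw [G.adj_comm]

lemma degIn_compl (G : SimpleGraph V) [DecidableRel G.Adj] (v : V) (S : Finset V) :
    degIn G v S + degIn G v Sᶜ = G.degree v := by
  unfold degIn
  rw [← Finset.card_union_of_disjoint (Finset.disjoint_filter_filter disjoint_compl_right),
    ← Finset.filter_union, Finset.union_compl]
  rw [← SimpleGraph.neighborFinset_eq_filter, SimpleGraph.degree]

theorem odd_degree_partition (G : SimpleGraph V) [DecidableRel G.Adj]
    (hodd : ∀ v : V, Odd (G.degree v)) :
    ∃ A B : Finset V,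
      A ∪ B = Finset.univ ∧ Disjoint A B ∧
      (∀ a ∈ A, degIn G a A < degIn G a B) ∧
      (∀ b ∈ B, degIn G b B < degIn G b A) := by
  classical
  set cut : Finset V → ℕ := fun A => ∑ v ∈ A, degIn G v Aᶜ with hcut
  obtain ⟨A, -, hmax⟩ := Finset.exists_max_image (Finset.univ : Finset (Finset V)) cut
    ⟨∅, Finset.mem_univ _⟩
  refine ⟨A, Aᶜ, Finset.union_compl A, disjoint_compl_right, ?_, ?_⟩
  · intro a haA
    have hle := hmax (A.erase a) (Finset.mem_univ _)
    have hAc : ((A.erase a)ᶜ).erase a = Aᶜ := by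
      rw [Finset.compl_erase, Finset.erase_insert (by simp [haA])]
    have haAc : a ∈ (A.erase a)ᶜ := by simp
    have h1 : cut (A.erase a)
        = (∑ v ∈ A.erase a, degIn G v Aᶜ) + degIn G a A := by
      rw [hcut]
      simp only
      rw [sum_degIn_split G (A.erase a) _ a haAc, hAc, filter_adj_comm, degIn_erase_self]
    have h2 : cut A = degIn G a Aᶜ + ∑ v ∈ A.erase a, degIn G v Aᶜ := by
      rw [hcut]
      simp only
      rw [← Finset.add_sum_erase _ _ haA]
    have hdeg := degIn_compl G a A
    obtain ⟨k, hk⟩ := hodd a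
    omega
  · intro b hbB
    have hbA : b ∉ A := by simpa using hbB
    have hle := hmax (insert b A) (Finset.mem_univ _)
    have hins : (insert b A)ᶜ = Aᶜ.erase b := Finset.compl_insert
    have h1 : cut (insert b A)
        = degIn G b Aᶜ + ∑ v ∈ A, degIn G v (Aᶜ.erase b) := by
      rw [hcut]
      simp only
      rw [Finset.sum_insert hbA, hins, degIn_erase_self]
    have h2 : cut A = (∑ v ∈ A, degIn G v (Aᶜ.erase b)) + degIn G b A := by
      rw [hcut]
      simp only
      rw [sum_degIn_split G A Aᶜ b hbB, filter_adj_comm]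
    have hdeg := degIn_compl G b A
    obtain ⟨k, hk⟩ := hodd b
    omega
end

section
/- Let G=(V,E) be a finite simple graph with a partition V = A ∪ B ∪ C satisfying: every a ∈ A has d_B(a) ≥ d_A(a) + max{1, d_C(a)} and every b ∈ B has d_A(b) ≥ d_B(b) + max{1, d_C(b)}. Then #E(A∪B, C) + 2·#E(A,A) + 2·#E(B,B) ≤ 2·#E(A,B). -/
/-!
Count ordered adjacent pairs: summing `d_Y(x)` over `x ∈ X` gives `#E(X, Y)` when `X` and `Y`
are disjoint and `2 · #E(X, X)` when `Y = X`. Summing the degree condition over `A` therefore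
gives `2 · #E(A, A) + #E(A, C) ≤ #E(A, B)`, summing it over `B` gives
`2 · #E(B, B) + #E(B, C) ≤ #E(A, B)`, and the two add up to the claim.
-/

open Finset

variable {V : Type*} [Fintype V] [DecidableEq V]

lemma card_interedges_eq_sum_degIn {α : Type*} (G : SimpleGraph α) [DecidableRel G.Adj]
    (X Y : Finset α) : #(G.interedges X Y) = ∑ x ∈ X, degIn G x Y := by
  simp only [SimpleGraph.interedges_def, degIn, card_filter, sum_product]

variable (G : SimpleGraph V) [DecidableRel G.Adj]

lemma eBtw_eq_card_image_interedges (X Y : Finset V) :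
    eBtw G X Y = #((G.interedges X Y).image (fun p => s(p.1, p.2))) := by
  suffices h : {e ∈ G.edgeFinset | ∃ x ∈ X, ∃ y ∈ Y, e = s(x, y)} =
      (G.interedges X Y).image (fun p => s(p.1, p.2)) by rw [eBtw, h]
  ext e
  induction e using Sym2.ind with
  | _ x y =>
    simp only [mem_filter, SimpleGraph.mem_edgeFinset, SimpleGraph.mem_edgeSet, mem_image,
      SimpleGraph.mem_interedges_iff]
    constructor
    · rintro ⟨hxy, a, ha, b, hb, hab⟩
      refine ⟨(a, b), ⟨ha, hb, ?_⟩, hab.symm⟩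
      rwa [← SimpleGraph.mem_edgeSet, ← hab]
    · rintro ⟨⟨a, b⟩, ⟨ha, hb, hab⟩, he⟩
      refine ⟨?_, a, ha, b, hb, he.symm⟩
      rwa [← SimpleGraph.mem_edgeSet, ← he]

lemma card_interedges_of_disjoint {X Y : Finset V} (hXY : Disjoint X Y) :
    #(G.interedges X Y) = eBtw G X Y := by
  rw [eBtw_eq_card_image_interedges, card_image_of_injOn]
  rintro ⟨a, b⟩ hab ⟨c, d⟩ hcd h
  simp only [mem_coe, SimpleGraph.mem_interedges_iff] at hab hcd
  rcases Sym2.eq_iff.1 h with ⟨rfl, rfl⟩ | ⟨rfl, rfl⟩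
  · rfl
  · exact absurd hcd.2.1 (disjoint_left.1 hXY hab.1)

lemma card_interedges_self (X : Finset V) :
    #(G.interedges X X) = 2 * eBtw G X X := by
  rw [card_eq_sum_card_image (fun p => s(p.1, p.2)), eBtw_eq_card_image_interedges, mul_comm,
    ← smul_eq_mul, ← sum_const]
  refine sum_congr rfl fun e he => ?_
  obtain ⟨⟨x, y⟩, hxy, rfl⟩ := mem_image.1 he
  rw [SimpleGraph.mem_interedges_iff] at hxy
  have hfiber : (G.interedges X X).filter (fun p => s(p.1, p.2) = s(x, y)) = {(x, y), (y, x)} := by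
    ext ⟨a, b⟩
    simp only [mem_filter, SimpleGraph.mem_interedges_iff, mem_insert, mem_singleton, Sym2.eq_iff,
      Prod.mk.injEq]
    constructor
    · exact And.right
    · rintro (⟨rfl, rfl⟩ | ⟨rfl, rfl⟩)
      · exact ⟨hxy, Or.inl ⟨rfl, rfl⟩⟩
      · exact ⟨⟨hxy.2.1, hxy.1, hxy.2.2.symm⟩, Or.inr ⟨rfl, rfl⟩⟩
  rw [hfiber, card_pair (by simpa using fun h _ => hxy.2.2.ne h)]

lemma eBtw_comm (X Y : Finset V) : eBtw G X Y = eBtw G Y X := by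
  rw [eBtw, eBtw]
  congr 1
  ext e
  simp only [mem_filter]
  constructor <;> rintro ⟨he, x, hx, y, hy, rfl⟩ <;> exact ⟨he, y, hy, x, hx, Sym2.eq_swap⟩

lemma eBtw_union_left {X Y Z : Finset V} (hXY : Disjoint X Y) (hXZ : Disjoint X Z)
    (hYZ : Disjoint Y Z) : eBtw G (X ∪ Y) Z = eBtw G X Z + eBtw G Y Z := by
  rw [← card_interedges_of_disjoint G (disjoint_union_left.2 ⟨hXZ, hYZ⟩),
    ← card_interedges_of_disjoint G hXZ, ← card_interedges_of_disjoint G hYZ,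
    card_interedges_eq_sum_degIn, card_interedges_eq_sum_degIn, card_interedges_eq_sum_degIn,
    sum_union hXY]

lemma two_mul_eBtw_self_add_eBtw_le {X Y Z : Finset V} (hXY : Disjoint X Y) (hXZ : Disjoint X Z)
    (h : ∀ x ∈ X, degIn G x X + degIn G x Z ≤ degIn G x Y) :
    2 * eBtw G X X + eBtw G X Z ≤ eBtw G X Y := by
  rw [← card_interedges_self, ← card_interedges_of_disjoint G hXZ,
    ← card_interedges_of_disjoint G hXY, card_interedges_eq_sum_degIn,
    card_interedges_eq_sum_degIn, card_interedges_eq_sum_degIn, ← sum_add_distrib]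
  exact sum_le_sum h

theorem global_edge_inequality_general (G : SimpleGraph V) [DecidableRel G.Adj]
    (A B C : Finset V)
    (hAB : Disjoint A B) (hAC : Disjoint A C) (hBC : Disjoint B C)
    (h1 : ∀ a ∈ A, degIn G a A + max 1 (degIn G a C) ≤ degIn G a B)
    (h2 : ∀ b ∈ B, degIn G b B + max 1 (degIn G b C) ≤ degIn G b A) :
    eBtw G (A ∪ B) C + 2 * eBtw G A A + 2 * eBtw G B B ≤ 2 * eBtw G A B := by
  have hA : 2 * eBtw G A A + eBtw G A C ≤ eBtw G A B :=
    two_mul_eBtw_self_add_eBtw_le G hAB hAC fun a ha =>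
      (Nat.add_le_add_left (le_max_right _ _) _).trans (h1 a ha)
  have hB : 2 * eBtw G B B + eBtw G B C ≤ eBtw G A B := by
    rw [eBtw_comm G A B]
    exact two_mul_eBtw_self_add_eBtw_le G hAB.symm hBC fun b hb =>
      (Nat.add_le_add_left (le_max_right _ _) _).trans (h2 b hb)
  rw [eBtw_union_left G hAB hAC hBC]
  omega

theorem global_edge_inequality (G : SimpleGraph V) [DecidableRel G.Adj]
    (A B C : Finset V)
    (hU : A ∪ B ∪ C = Finset.univ)
    (hAB : Disjoint A B) (hAC : Disjoint A C) (hBC : Disjoint B C)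
    (h1 : ∀ a ∈ A, degIn G a A + max 1 (degIn G a C) ≤ degIn G a B)
    (h2 : ∀ b ∈ B, degIn G b B + max 1 (degIn G b C) ≤ degIn G b A) :
    eBtw G (A ∪ B) C + 2 * eBtw G A A + 2 * eBtw G B B ≤ 2 * eBtw G A B :=
  global_edge_inequality_general G A B C hAB hAC hBC h1 h2
end

section
/- Let G=(V,E) be a finite simple connected graph with maximum degree Δ, and let V = A ∪ B ∪ C be a decomposition satisfying properties (1)–(4) of the main decomposition (in particular #E(A,C) = #E(B,C)). Then the number of edges between A ∪ C and B satisfies #E(A∪C, B) ≥ (1/2 + 1/(3Δ))·|E|. -/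
open Finset

variable {V : Type*} [Fintype V] [DecidableEq V]

lemma degIn_eq_sum (G : SimpleGraph V) [DecidableRel G.Adj] (v : V) (S : Finset V) :
    degIn G v S = ∑ y ∈ S, if G.Adj v y then 1 else 0 := by
  rw [degIn, Finset.card_filter]

lemma sum_degIn_comm (G : SimpleGraph V) [DecidableRel G.Adj] (X Y : Finset V) :
    ∑ x ∈ X, degIn G x Y = ∑ y ∈ Y, degIn G y X := by
  simp only [degIn_eq_sum]
  rw [Finset.sum_comm]
  congr 1; ext y; congr 1; ext x
  simp [G.adj_comm]

lemma degIn_union (G : SimpleGraph V) [DecidableRel G.Adj] (v : V) {S T : Finset V}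
    (h : Disjoint S T) : degIn G v (S ∪ T) = degIn G v S + degIn G v T := by
  unfold degIn
  rw [Finset.filter_union, Finset.card_union_of_disjoint]
  exact Finset.disjoint_filter_filter h

lemma eBtw_eq_sum (G : SimpleGraph V) [DecidableRel G.Adj] {X Y : Finset V}
    (hXY : Disjoint X Y) : eBtw G X Y = ∑ x ∈ X, degIn G x Y := by
  have key : ∑ x ∈ X, degIn G x Y
      = ((X ×ˢ Y).filter (fun p => G.Adj p.1 p.2)).card := by
    rw [Finset.card_filter, Finset.sum_product]
    simp [degIn_eq_sum]
  rw [key, eBtw]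
  symm
  apply Finset.card_bij (fun p _ => s(p.1, p.2))
  · intro p hp
    simp only [Finset.mem_filter, Finset.mem_product] at hp
    simp only [Finset.mem_filter, SimpleGraph.mem_edgeFinset, SimpleGraph.mem_edgeSet]
    exact ⟨hp.2, p.1, hp.1.1, p.2, hp.1.2, rfl⟩
  · intro p hp q hq h
    simp only [Finset.mem_filter, Finset.mem_product] at hp hq
    rcases Sym2.eq_iff.mp h with ⟨h1, h2⟩ | ⟨h1, h2⟩
    · exact Prod.ext h1 h2
    · exact absurd hq.1.1 (Finset.disjoint_right.mp hXY (h2 ▸ hp.1.2))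
  · intro e he
    simp only [Finset.mem_filter, SimpleGraph.mem_edgeFinset, SimpleGraph.mem_edgeSet] at he
    obtain ⟨he, x, hx, y, hy, rfl⟩ := he
    exact ⟨(x, y), Finset.mem_filter.mpr ⟨Finset.mem_product.mpr ⟨hx, hy⟩,
      (SimpleGraph.mem_edgeSet G).mp he⟩, rfl⟩

theorem judicious_cut (G : SimpleGraph V) [DecidableRel G.Adj]
    (hconn : G.Connected) (hΔ : 1 ≤ G.maxDegree)
    (A B C : Finset V)
    (hU : A ∪ B ∪ C = Finset.univ)
    (hAB : Disjoint A B) (hAC : Disjoint A C) (hBC : Disjoint B C)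
    (h1 : ∀ a ∈ A, degIn G a A + max 1 (degIn G a C) ≤ degIn G a B)
    (h2 : ∀ b ∈ B, degIn G b B + max 1 (degIn G b C) ≤ degIn G b A)
    (h3 : ∀ c ∈ C, ∀ c' ∈ C, ¬ G.Adj c c')
    (h4 : ∀ c ∈ C, degIn G c A = degIn G c B) :
    ((1 : ℚ) / 2 + 1 / (3 * G.maxDegree)) * G.edgeFinset.card ≤ eBtw G (A ∪ C) B := by
  classical
  have hNE : Nonempty V := hconn.nonempty
  set Δ := G.maxDegree with hΔdef
  -- notation
  set a := ∑ v ∈ A, degIn G v A with ha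
  set b := ∑ v ∈ B, degIn G v B with hb
  set p := ∑ v ∈ A, degIn G v B with hp
  set q := ∑ v ∈ B, degIn G v C with hq
  set m := G.edgeFinset.card with hm
  -- every vertex of C has a neighbor in B
  have hCB : ∀ c ∈ C, 1 ≤ degIn G c B := by
    intro c hc
    have hdegpos : 0 < G.degree c := by
      obtain ⟨v, hv⟩ := G.exists_maximal_degree_vertex
      have hvpos : 0 < G.degree v := lt_of_lt_of_le Nat.zero_lt_one (hv ▸ hΔ)
      by_contra h
      push_neg at h
      have hc0 : G.degree c = 0 := Nat.le_zero.mp h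
      have hvc : c ≠ v := by
        rintro rfl; omega
      obtain ⟨w⟩ := hconn.preconnected c v
      cases w with
      | nil => exact hvc rfl
      | cons hadj _ =>
        have : 0 < G.degree c := (G.degree_pos_iff_exists_adj c).mpr ⟨_, hadj⟩
        omega
    -- degree c = degIn over A,B,C ; degIn c C = 0
    have hdc : G.degree c = degIn G c A + degIn G c B + degIn G c C := by
      have h5 : G.degree c = degIn G c Finset.univ := by
        rw [degIn, ← SimpleGraph.neighborFinset_eq_filter]; rfl
      rw [← hU, degIn_union G c (Finset.disjoint_union_left.mpr ⟨hAC, hBC⟩),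
        degIn_union G c hAB] at h5
      exact h5
    have hcc : degIn G c C = 0 := by
      rw [degIn, Finset.card_eq_zero, Finset.filter_eq_empty_iff]
      exact fun c' hc' => h3 c hc c' hc'
    have := h4 c hc
    omega
  -- degree decomposition
  have hdeg : ∀ v : V, G.degree v = degIn G v A + degIn G v B + degIn G v C := by
    intro v
    have h5 : G.degree v = degIn G v Finset.univ := by
      rw [degIn, ← SimpleGraph.neighborFinset_eq_filter]; rfl
    rw [← hU, degIn_union G v (Finset.disjoint_union_left.mpr ⟨hAC, hBC⟩),
      degIn_union G v hAB] at h5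
    exact h5
  -- symmetry identities
  have hq1 : ∑ v ∈ A, degIn G v C = q := by
    rw [sum_degIn_comm, Finset.sum_congr rfl h4, ← sum_degIn_comm]
  have hq2 : ∑ v ∈ C, degIn G v A = q := by
    rw [Finset.sum_congr rfl h4, ← sum_degIn_comm]
  have hq3 : ∑ v ∈ C, degIn G v B = q := by rw [← sum_degIn_comm]
  have hp1 : ∑ v ∈ B, degIn G v A = p := (sum_degIn_comm G B A).symm ▸ rfl
  have hCC : ∑ v ∈ C, degIn G v C = 0 := by
    apply Finset.sum_eq_zero
    intro c hc
    rw [degIn, Finset.card_eq_zero, Finset.filter_eq_empty_iff]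
    exact fun c' hc' => h3 c hc c' hc'
  -- (E1) from h1
  have E1 : 3 * a + (2 * A.card + q) ≤ 3 * p := by
    have key : ∀ v ∈ A, 3 * degIn G v A + (2 + degIn G v C) ≤ 3 * degIn G v B := by
      intro v hv
      have h := h1 v hv
      have l1 := le_max_left 1 (degIn G v C)
      have l2 := le_max_right 1 (degIn G v C)
      omega
    have E1' := Finset.sum_le_sum key
    rw [Finset.sum_add_distrib, Finset.sum_add_distrib, Finset.sum_const,
      ← Finset.mul_sum, ← Finset.mul_sum, ← ha, hq1, smul_eq_mul, ← hp] at E1'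
    omega
  -- (E2) from h2
  have E2 : 3 * b + (2 * B.card + q) ≤ 3 * p := by
    have key : ∀ v ∈ B, 3 * degIn G v B + (2 + degIn G v C) ≤ 3 * degIn G v A := by
      intro v hv
      have h := h2 v hv
      have l1 := le_max_left 1 (degIn G v C)
      have l2 := le_max_right 1 (degIn G v C)
      omega
    have E2' := Finset.sum_le_sum key
    rw [Finset.sum_add_distrib, Finset.sum_add_distrib, Finset.sum_const,
      ← Finset.mul_sum, ← Finset.mul_sum, ← hb, ← hq, smul_eq_mul, hp1] at E2'
    omega
  -- (E3)
  have E3 : C.card ≤ q := by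
    rw [← hq3]
    calc C.card = ∑ _v ∈ C, 1 := by rw [Finset.sum_const, smul_eq_mul, mul_one]
    _ ≤ ∑ v ∈ C, degIn G v B := Finset.sum_le_sum hCB
  -- (E4) handshake
  have E4 : 2 * m = a + b + 2 * p + 4 * q := by
    have hsum : ∑ v, G.degree v = 2 * m := G.sum_degrees_eq_twice_card_edges
    rw [show (Finset.univ : Finset V) = A ∪ B ∪ C from hU.symm,
      Finset.sum_union (Finset.disjoint_union_left.mpr ⟨hAC, hBC⟩),
      Finset.sum_union hAB] at hsum
    simp only [hdeg, Finset.sum_add_distrib] at hsum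
    rw [← ha, ← hb, ← hp, ← hq, hq1, hq2, hq3, hp1, hCC] at hsum
    omega
  -- (E5) degree bound
  have E5 : 2 * m ≤ Δ * (A.card + B.card + C.card) := by
    have h6 : ∑ v, G.degree v ≤ Fintype.card V * Δ := by
      calc ∑ v, G.degree v ≤ ∑ _v : V, Δ :=
            Finset.sum_le_sum fun v _ => G.degree_le_maxDegree v
        _ = Fintype.card V * Δ := by
            rw [Finset.sum_const, smul_eq_mul, Finset.card_univ]
    rw [G.sum_degrees_eq_twice_card_edges, ← hm] at h6
    have hcard : Fintype.card V = A.card + B.card + C.card := by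
      rw [← Finset.card_univ, ← hU,
        Finset.card_union_of_disjoint (Finset.disjoint_union_left.mpr ⟨hAC, hBC⟩),
        Finset.card_union_of_disjoint hAB]
    rw [hcard] at h6
    calc 2 * m ≤ (A.card + B.card + C.card) * Δ := h6
      _ = Δ * (A.card + B.card + C.card) := by ring
  -- the cut equals p + q
  have hcut : eBtw G (A ∪ C) B = p + q := by
    rw [eBtw_eq_sum G (Finset.disjoint_union_left.mpr ⟨hAB, hBC.symm⟩),
      Finset.sum_union hAC, hq3, ← hp]
  -- final arithmetic over ℚ
  rw [hcut]
  have hΔ1 : (1 : ℚ) ≤ (Δ : ℚ) := by exact_mod_cast hΔ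
  have hΔpos : (0 : ℚ) < (Δ : ℚ) := by linarith
  have qE1 : 3 * (a : ℚ) + (2 * (A.card : ℚ) + q) ≤ 3 * p := by exact_mod_cast E1
  have qE2 : 3 * (b : ℚ) + (2 * (B.card : ℚ) + q) ≤ 3 * p := by exact_mod_cast E2
  have qE3 : ((C.card : ℚ)) ≤ q := by exact_mod_cast E3
  have qE4 : 2 * (m : ℚ) = a + b + 2 * p + 4 * q := by exact_mod_cast E4
  have qE5 : 2 * (m : ℚ) ≤ Δ * ((A.card : ℚ) + B.card + C.card) := by exact_mod_cast E5
  have hE1Δ := mul_le_mul_of_nonneg_left qE1 hΔpos.le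
  have hE2Δ := mul_le_mul_of_nonneg_left qE2 hΔpos.le
  have hE3Δ := mul_le_mul_of_nonneg_left qE3 hΔpos.le
  have hE4Δ : (Δ : ℚ) * (2 * m) = Δ * (a + b + 2 * p + 4 * q) := by rw [qE4]
  rw [div_add_div _ _ (two_ne_zero) (by positivity), div_mul_eq_mul_div,
    div_le_iff₀ (by positivity)]
  push_cast
  nlinarith [hE1Δ, hE2Δ, hE3Δ, hE4Δ, qE5, hΔpos]
end

section
/- For the complete graph K_n with n even, any decomposition V = A ∪ B ∪ C satisfying properties (1)–(4) must have C = ∅ and |A| = |B| = n/2. -/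
open Finset

variable {V : Type*} [Fintype V] [DecidableEq V]

lemma degIn_top {n : ℕ} (v : Fin n) (S : Finset (Fin n)) :
    degIn (⊤ : SimpleGraph (Fin n)) v S = (S.erase v).card := by
  unfold degIn
  congr 1
  ext w
  simp [SimpleGraph.top_adj, eq_comm, and_comm]

theorem complete_even (n : ℕ) (hn : 2 ≤ n) (hev : Even n)
    (A B C : Finset (Fin n))
    (hU : A ∪ B ∪ C = Finset.univ)
    (hAB : Disjoint A B) (hAC : Disjoint A C) (hBC : Disjoint B C)
    (h1 : ∀ a ∈ A, degIn (⊤ : SimpleGraph (Fin n)) a A +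
            max 1 (degIn (⊤ : SimpleGraph (Fin n)) a C) ≤
            degIn (⊤ : SimpleGraph (Fin n)) a B)
    (h2 : ∀ b ∈ B, degIn (⊤ : SimpleGraph (Fin n)) b B +
            max 1 (degIn (⊤ : SimpleGraph (Fin n)) b C) ≤
            degIn (⊤ : SimpleGraph (Fin n)) b A)
    (h3 : ∀ c ∈ C, ∀ c' ∈ C, ¬ (⊤ : SimpleGraph (Fin n)).Adj c c')
    (h4 : ∀ c ∈ C, degIn (⊤ : SimpleGraph (Fin n)) c A =
            degIn (⊤ : SimpleGraph (Fin n)) c B) :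
    C = ∅ ∧ A.card = n / 2 ∧ B.card = n / 2 := by
  have hCempty : C = ∅ := by
    by_contra hC
    obtain ⟨c, hc⟩ := Finset.nonempty_iff_ne_empty.mpr hC
    have hCsub : C = {c} := by
      apply Finset.eq_singleton_iff_unique_mem.mpr
      refine ⟨hc, fun c' hc' => ?_⟩
      have := h3 c hc c' hc'
      simp [SimpleGraph.top_adj] at this
      exact this.symm
    have hcA : c ∉ A := fun h => (Finset.disjoint_left.mp hAC h) hc
    have hcB : c ∉ B := fun h => (Finset.disjoint_left.mp hBC h) hc
    have h4c := h4 c hc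
    rw [degIn_top, degIn_top, Finset.erase_eq_of_notMem hcA,
      Finset.erase_eq_of_notMem hcB] at h4c
    have hcard : A.card + B.card + C.card = n := by
      have := congrArg Finset.card hU
      rwa [Finset.card_union_of_disjoint (by
          rw [Finset.disjoint_union_left]; exact ⟨hAC, hBC⟩),
        Finset.card_union_of_disjoint hAB, Finset.card_univ, Fintype.card_fin] at this
    rw [hCsub] at hcard
    simp only [Finset.card_singleton] at hcard
    obtain ⟨k, hk⟩ := hev
    omega
  subst hCempty
  have hcard : A.card + B.card = n := by
    have := congrArg Finset.card hU
    rwa [Finset.union_empty, Finset.card_union_of_disjoint hAB,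
      Finset.card_univ, Fintype.card_fin] at this
  have hAle : ∀ a ∈ A, A.card ≤ B.card := by
    intro a ha
    have := h1 a ha
    rw [degIn_top, degIn_top, degIn_top, Finset.erase_empty,
      Finset.card_erase_of_mem ha,
      Finset.erase_eq_of_notMem (fun h => (Finset.disjoint_left.mp hAB ha) h)] at this
    have hA1 : 1 ≤ A.card := Finset.card_pos.mpr ⟨a, ha⟩
    simp at this
    omega
  have hBle : ∀ b ∈ B, B.card ≤ A.card := by
    intro b hb
    have := h2 b hb
    rw [degIn_top, degIn_top, degIn_top, Finset.erase_empty,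
      Finset.card_erase_of_mem hb,
      Finset.erase_eq_of_notMem (fun h => (Finset.disjoint_left.mp hAB h) hb)] at this
    have hB1 : 1 ≤ B.card := Finset.card_pos.mpr ⟨b, hb⟩
    simp at this
    omega
  have hANe : A.Nonempty := by
    by_contra hA
    have hA0 : A.card = 0 := by simp [Finset.not_nonempty_iff_eq_empty.mp hA]
    have hBpos : 0 < B.card := by omega
    obtain ⟨b, hb⟩ := Finset.card_pos.mp hBpos
    have := hBle b hb
    omega
  obtain ⟨a, ha⟩ := hANe
  have h1' := hAle a ha
  have hBpos : 0 < B.card := by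
    have hA1 : 1 ≤ A.card := Finset.card_pos.mpr ⟨a, ha⟩
    omega
  obtain ⟨b, hb⟩ := Finset.card_pos.mp hBpos
  have h2' := hBle b hb
  refine ⟨rfl, ?_, ?_⟩ <;> omega
end

section
/- Let g be the 2π-periodic function with g(x) = 1 − (2/π)·d_{S¹}(0,x) and f(θ_1,…,θ_n) = Σ_{i,j} a_ij g(θ_i − θ_j) for a finite simple graph G with adjacency matrix (a_ij). Then min over (θ_1,…,θ_n) ∈ (S¹)^n of f equals 2|E| − 4·MaxCut(G); in particular f is bounded below by −2|E|. -/
/-!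
Let `s` be the `±1` square wave of period `1` (`+1` on `[0, 1/2)`). The function `g` is its
autocorrelation: `g x = ∫₀¹ s(t + x/2π) s(t) dt`. Hence `f(θ)` is the average over `t ∈ [0, 1]`
of the Ising energy `Σ a_ij σ_i σ_j` of the spins `σ_i = s(t + θ_i/2π)`. For spins `±1` given by
a set `S` that energy is `2|E| - 4·cut(S) ≥ 2|E| - 4·MaxCut(G)`, and the antipodal configuration
of a maximum cut has exactly this energy. This is random half-circle rounding, in integral form.
-/

open Finset

variable {V : Type*} [Fintype V] [DecidableEq V]

open Real

/-- Arc-length distance from `0` to `x` on the circle `ℝ/2πℤ` of circumference `2π`. -/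
noncomputable def dS1 (x : ℝ) : ℝ :=
  min (2 * π * Int.fract (x / (2 * π))) (2 * π - 2 * π * Int.fract (x / (2 * π)))

noncomputable def gfun (x : ℝ) : ℝ := 1 - (2 / π) * dS1 x

/-- The energy functional `f(θ) = Σ_{i,j} a_ij g(θ_i - θ_j)`. -/
noncomputable def energy (G : SimpleGraph V) [DecidableRel G.Adj] (θ : V → ℝ) : ℝ :=
  ∑ i : V, ∑ j : V, (if G.Adj i j then (1 : ℝ) else 0) * gfun (θ i - θ j)

def maxCut (G : SimpleGraph V) [DecidableRel G.Adj] : ℕ :=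
  (Finset.univ : Finset (Finset V)).sup (fun S => eBtw G S (Finset.univ \ S))

open MeasureTheory

noncomputable def sqWave (x : ℝ) : ℝ := if Int.fract x < 1 / 2 then 1 else -1

lemma sqWave_add_intCast (x : ℝ) (n : ℤ) : sqWave (x + n) = sqWave x := by
  simp only [sqWave, Int.fract_add_intCast]

lemma sqWave_periodic : Function.Periodic sqWave 1 := fun x ↦ by
  simpa using sqWave_add_intCast x 1

lemma sqWave_of_mem_Ico_zero_half {x : ℝ} (hx : x ∈ Set.Ico 0 (1 / 2)) : sqWave x = 1 := by
  rw [sqWave, Int.fract_eq_self.mpr ⟨hx.1, by linarith [hx.2]⟩, if_pos hx.2]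

lemma sqWave_of_mem_Ico_half_one {x : ℝ} (hx : x ∈ Set.Ico (1 / 2) 1) : sqWave x = -1 := by
  rw [sqWave, Int.fract_eq_self.mpr ⟨by linarith [hx.1], hx.2⟩, if_neg hx.1.not_gt]

lemma sqWave_of_mem_Ico_one_three_halves {x : ℝ} (hx : x ∈ Set.Ico 1 (3 / 2)) :
    sqWave x = 1 := by
  rw [← sqWave_add_intCast x (-1)]
  push_cast
  exact sqWave_of_mem_Ico_zero_half ⟨by linarith [hx.1], by linarith [hx.2]⟩

lemma sqWave_add_half (x : ℝ) : sqWave (x + 1 / 2) = -sqWave x := by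
  rw [← Int.fract_add_floor x, add_right_comm, sqWave_add_intCast, sqWave_add_intCast]
  have h₀ := Int.fract_nonneg x
  have h₁ := Int.fract_lt_one x
  rcases lt_or_ge (Int.fract x) (1 / 2) with h | h
  · rw [sqWave_of_mem_Ico_half_one ⟨by linarith, by linarith⟩,
      sqWave_of_mem_Ico_zero_half ⟨h₀, h⟩]
  · rw [sqWave_of_mem_Ico_one_three_halves ⟨by linarith, by linarith⟩,
      sqWave_of_mem_Ico_half_one ⟨h, h₁⟩, neg_neg]

lemma sqWave_sq (x : ℝ) : sqWave x ^ 2 = 1 := by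
  unfold sqWave; split_ifs <;> norm_num

lemma measurable_sqWave : Measurable sqWave :=
  Measurable.ite (measurableSet_lt measurable_fract measurable_const) measurable_const
    measurable_const

lemma abs_sqWave (x : ℝ) : |sqWave x| = 1 := by
  unfold sqWave; split_ifs <;> norm_num

lemma intervalIntegrable_sqWave_mul (c d a b : ℝ) :
    IntervalIntegrable (fun t ↦ sqWave (t + c) * sqWave (t + d)) volume a b :=
  (intervalIntegrable_const (c := (1 : ℝ))).mono_fun'
    ((measurable_sqWave.comp (measurable_add_const c)).mul
      (measurable_sqWave.comp (measurable_add_const d))).aestronglyMeasurable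
    (ae_of_all _ fun t ↦ by simp [abs_sqWave])

lemma intervalIntegral_eq_of_eqOn_Ioo {f : ℝ → ℝ} {a b c : ℝ} (hab : a ≤ b)
    (h : Set.EqOn f (fun _ ↦ c) (Set.Ioo a b)) : ∫ t in a..b, f t = (b - a) * c := by
  rw [intervalIntegral.integral_of_le hab, integral_Ioc_eq_integral_Ioo,
    setIntegral_congr_fun measurableSet_Ioo h, setIntegral_const, volume_real_Ioo_of_le hab,
    smul_eq_mul]

lemma integral_sqWave_add_mul_of_le_half {w : ℝ} (h₀ : 0 ≤ w) (h₁ : w ≤ 1 / 2) :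
    ∫ t in (0 : ℝ)..1, sqWave (t + w) * sqWave t = 1 - 4 * w := by
  have hf := intervalIntegrable_sqWave_mul w 0
  simp only [add_zero] at hf
  rw [← intervalIntegral.integral_add_adjacent_intervals (hf 0 (1 / 2 - w)) (hf _ 1),
    ← intervalIntegral.integral_add_adjacent_intervals (hf (1 / 2 - w) (1 / 2)) (hf _ 1),
    ← intervalIntegral.integral_add_adjacent_intervals (hf (1 / 2) (1 - w)) (hf _ 1),
    intervalIntegral_eq_of_eqOn_Ioo (c := 1) (by linarith),
    intervalIntegral_eq_of_eqOn_Ioo (c := -1) (by linarith),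
    intervalIntegral_eq_of_eqOn_Ioo (c := 1) (by linarith),
    intervalIntegral_eq_of_eqOn_Ioo (c := -1) (by linarith)]
  · ring
  all_goals rintro t ⟨ht₀, ht₁⟩; dsimp only
  · rw [sqWave_of_mem_Ico_one_three_halves ⟨by linarith, by linarith⟩,
      sqWave_of_mem_Ico_half_one ⟨by linarith, ht₁⟩]; norm_num
  · rw [sqWave_of_mem_Ico_half_one ⟨by linarith, by linarith⟩,
      sqWave_of_mem_Ico_half_one ⟨by linarith, by linarith⟩]; norm_num
  · rw [sqWave_of_mem_Ico_half_one ⟨by linarith, by linarith⟩,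
      sqWave_of_mem_Ico_zero_half ⟨by linarith, ht₁⟩]; norm_num
  · rw [sqWave_of_mem_Ico_zero_half ⟨by linarith, by linarith⟩,
      sqWave_of_mem_Ico_zero_half ⟨by linarith, by linarith⟩]; norm_num

lemma integral_sqWave_add_mul (w : ℝ) :
    ∫ t in (0 : ℝ)..1, sqWave (t + w) * sqWave t
      = 1 - 4 * min (Int.fract w) (1 - Int.fract w) := by
  have hfract (t : ℝ) : sqWave (t + w) = sqWave (t + Int.fract w) := by
    rw [← sqWave_add_intCast (t + Int.fract w) ⌊w⌋, add_assoc, Int.fract_add_floor]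
  simp_rw [hfract]
  have h₀ := Int.fract_nonneg w
  have h₁ := Int.fract_lt_one w
  rcases le_or_gt (Int.fract w) (1 / 2) with hw | hw
  · rw [integral_sqWave_add_mul_of_le_half h₀ hw, min_eq_left (by linarith)]
  · have hhalf (t : ℝ) : sqWave (t + Int.fract w) = -sqWave (t + (Int.fract w - 1 / 2)) := by
      rw [← sqWave_add_half]; ring_nf
    simp_rw [hhalf, neg_mul, intervalIntegral.integral_neg]
    rw [integral_sqWave_add_mul_of_le_half (by linarith) (by linarith), min_eq_right (by linarith)]
    ring

lemma integral_sqWave_add_mul_sqWave_add (a b : ℝ) :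
    ∫ t in (0 : ℝ)..1, sqWave (t + a) * sqWave (t + b)
      = 1 - 4 * min (Int.fract (a - b)) (1 - Int.fract (a - b)) := by
  set f := fun t ↦ sqWave (t + (a - b)) * sqWave t
  have hf : Function.Periodic f 1 := (sqWave_periodic.add_const (a - b)).mul sqWave_periodic
  calc ∫ t in (0 : ℝ)..1, sqWave (t + a) * sqWave (t + b)
      = ∫ t in (0 : ℝ)..1, f (t + b) := by simp only [f, add_assoc, add_sub_cancel]
    _ = ∫ t in b..b + 1, f t := by
        rw [intervalIntegral.integral_comp_add_right, zero_add, add_comm 1]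
    _ = ∫ t in (0 : ℝ)..0 + 1, f t := hf.intervalIntegral_add_eq b 0
    _ = _ := by rw [zero_add, integral_sqWave_add_mul]

lemma gfun_eq (x : ℝ) :
    gfun x = 1 - 4 * min (Int.fract (x / (2 * π))) (1 - Int.fract (x / (2 * π))) := by
  rw [gfun, dS1, show 2 * π - 2 * π * Int.fract (x / (2 * π))
    = 2 * π * (1 - Int.fract (x / (2 * π))) by ring, ← mul_min_of_nonneg _ _ (by positivity)]
  field_simp
  ring

lemma gfun_sub_eq_integral (x y : ℝ) :
    gfun (x - y)
      = ∫ t in (0 : ℝ)..1, sqWave (t + x / (2 * π)) * sqWave (t + y / (2 * π)) := by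
  rw [gfun_eq, integral_sqWave_add_mul_sqWave_add, sub_div]

lemma sum_sum_boole_mem {α β : Type*} [Fintype α] [Fintype β] [DecidableEq α] [DecidableEq β]
    (X : Finset (α × β)) : ∑ i, ∑ j, (if (i, j) ∈ X then (1 : ℝ) else 0) = #X := by
  rw [← sum_product' (f := fun i j ↦ if (i, j) ∈ X then (1 : ℝ) else 0), sum_boole,
    filter_mem_eq_inter, univ_product_univ, univ_inter]

section Graph

variable {α : Type*} [Fintype α] (G : SimpleGraph α) [DecidableRel G.Adj]

def isingEnergy (σ : α → ℝ) : ℝ :=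
  ∑ i, ∑ j, (if G.Adj i j then (1 : ℝ) else 0) * (σ i * σ j)

lemma isingEnergy_smul (c : ℝ) (σ : α → ℝ) :
    isingEnergy G (c • σ) = c ^ 2 * isingEnergy G σ := by
  simp only [isingEnergy, mul_sum, Pi.smul_apply, smul_eq_mul]
  exact sum_congr rfl fun i _ ↦ sum_congr rfl fun j _ ↦ by ring

lemma intervalIntegrable_isingEnergy_sqWave (φ : α → ℝ) (a b : ℝ) :
    IntervalIntegrable (fun t ↦ isingEnergy G fun i ↦ sqWave (t + φ i)) volume a b := by
  simpa [isingEnergy, sum_fn] using IntervalIntegrable.sum univ fun i _ ↦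
    IntervalIntegrable.sum univ fun j _ ↦
      (intervalIntegrable_sqWave_mul (φ i) (φ j) a b).const_mul
        (if G.Adj i j then (1 : ℝ) else 0)

lemma energy_eq_integral (θ : α → ℝ) :
    energy G θ = ∫ t in (0 : ℝ)..1, isingEnergy G fun i ↦ sqWave (t + θ i / (2 * π)) := by
  have hterm (i j : α) :=
    (intervalIntegrable_sqWave_mul (θ i / (2 * π)) (θ j / (2 * π)) 0 1).const_mul
      (if G.Adj i j then (1 : ℝ) else 0)
  simp only [isingEnergy]
  rw [intervalIntegral.integral_finsetSum fun i _ ↦ by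
    simpa [sum_fn] using IntervalIntegrable.sum univ fun j _ ↦ hterm i j]
  refine sum_congr rfl fun i _ ↦ ?_
  rw [intervalIntegral.integral_finsetSum fun j _ ↦ hterm i j]
  simp only [intervalIntegral.integral_const_mul, gfun_sub_eq_integral]

variable [DecidableEq α]

lemma eBtw_eq_card_interedges {S T : Finset α} (hST : Disjoint S T) :
    eBtw G S T = #(G.interedges S T) := by
  symm
  refine card_bij (fun p _ ↦ s(p.1, p.2)) ?_ ?_ ?_
  · rintro ⟨x, y⟩ hp
    obtain ⟨hx, hy, hxy⟩ := G.mk_mem_interedges_iff.mp hp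
    exact mem_filter.mpr ⟨SimpleGraph.mem_edgeFinset.mpr hxy, x, hx, y, hy, rfl⟩
  · rintro ⟨x, y⟩ hp ⟨x', y'⟩ hp' h
    obtain ⟨hx, -, -⟩ := G.mk_mem_interedges_iff.mp hp
    obtain ⟨-, hy', -⟩ := G.mk_mem_interedges_iff.mp hp'
    rcases Sym2.eq_iff.mp h with ⟨rfl, rfl⟩ | ⟨rfl, rfl⟩
    · rfl
    · exact absurd hy' (Finset.disjoint_left.mp hST hx)
  · intro e he
    obtain ⟨he, x, hx, y, hy, rfl⟩ := mem_filter.mp he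
    exact ⟨(x, y), G.mk_mem_interedges_iff.mpr ⟨hx, hy, SimpleGraph.mem_edgeFinset.mp he⟩,
      rfl⟩

lemma le_maxCut (S : Finset α) : eBtw G S (univ \ S) ≤ maxCut G :=
  le_sup (f := fun S ↦ eBtw G S (univ \ S)) (mem_univ S)

lemma maxCut_le_card_edgeFinset : maxCut G ≤ #G.edgeFinset :=
  Finset.sup_le fun _ _ ↦ card_filter_le _ _

lemma exists_eBtw_eq_maxCut : ∃ S : Finset α, eBtw G S (univ \ S) = maxCut G := by
  obtain ⟨S, -, hS⟩ := exists_mem_eq_sup univ univ_nonempty fun S ↦ eBtw G S (univ \ S)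
  exact ⟨S, hS.symm⟩

def spin (S : Finset α) (i : α) : ℝ := if i ∈ S then 1 else -1

lemma isingEnergy_spin (S : Finset α) :
    isingEnergy G (spin S) = 2 * #G.edgeFinset - 4 * eBtw G S (univ \ S) := by
  have hpair (i j : α) : (if G.Adj i j then (1 : ℝ) else 0) * (spin S i * spin S j)
      = (if G.Adj i j then 1 else 0) - 2 * (if (i, j) ∈ G.interedges S (univ \ S) then 1 else 0)
        - 2 * (if (j, i) ∈ G.interedges S (univ \ S) then 1 else 0) := by
    simp only [SimpleGraph.mk_mem_interedges_iff, mem_sdiff, mem_univ, true_and, spin]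
    by_cases hi : i ∈ S <;> by_cases hj : j ∈ S <;> by_cases h : G.Adj i j <;>
      simp [hi, hj, h, G.adj_comm j i] <;> norm_num
  have hdeg : ∑ i, ∑ j, (if G.Adj i j then (1 : ℝ) else 0) = 2 * #G.edgeFinset := by
    simp only [sum_boole, ← SimpleGraph.neighborFinset_eq_filter,
      SimpleGraph.card_neighborFinset_eq_degree]
    exact_mod_cast G.sum_degrees_eq_twice_card_edges
  rw [isingEnergy, sum_congr rfl fun i _ ↦ sum_congr rfl fun j _ ↦ hpair i j]
  simp only [sum_sub_distrib, ← mul_sum]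
  rw [sum_comm (f := fun i j ↦ if (j, i) ∈ _ then (1 : ℝ) else 0), hdeg, sum_sum_boole_mem,
    eBtw_eq_card_interedges G disjoint_sdiff]
  ring

lemma sub_le_energy (θ : α → ℝ) :
    2 * (#G.edgeFinset : ℝ) - 4 * maxCut G ≤ energy G θ := by
  rw [energy_eq_integral]
  calc 2 * (#G.edgeFinset : ℝ) - 4 * maxCut G
      = ∫ _ in (0 : ℝ)..1, 2 * (#G.edgeFinset : ℝ) - 4 * maxCut G := by simp
    _ ≤ _ := intervalIntegral.integral_mono_on zero_le_one intervalIntegrable_const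
        (intervalIntegrable_isingEnergy_sqWave G _ 0 1) fun t _ ↦ ?_
  set S := univ.filter fun i ↦ Int.fract (t + θ i / (2 * π)) < 1 / 2
  have hS : (fun i ↦ sqWave (t + θ i / (2 * π))) = spin S := by
    ext i
    simp [sqWave, spin, S]
  have hcut : (eBtw G S (univ \ S) : ℝ) ≤ maxCut G := by exact_mod_cast le_maxCut G S
  rw [hS, isingEnergy_spin]
  linarith

lemma energy_antipodal (S : Finset α) :
    energy G (fun i ↦ if i ∈ S then 0 else π)
      = 2 * #G.edgeFinset - 4 * eBtw G S (univ \ S) := by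
  have hS (t : ℝ) :
      (fun i ↦ sqWave (t + (if i ∈ S then 0 else π) / (2 * π))) = sqWave t • spin S := by
    ext i
    by_cases hi : i ∈ S
    · simp [hi, spin]
    · simp only [hi, if_false, spin, Pi.smul_apply, smul_eq_mul, mul_neg, mul_one]
      rw [show π / (2 * π) = 1 / 2 by field_simp, sqWave_add_half]
  simp only [energy_eq_integral, hS, isingEnergy_smul, sqWave_sq, one_mul,
    intervalIntegral.integral_const, isingEnergy_spin]
  simp

end Graph

theorem energy_min_eq_maxcut (G : SimpleGraph V) [DecidableRel G.Adj] :
    IsLeast {y : ℝ | ∃ θ : V → ℝ, y = energy G θ}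
      (2 * (G.edgeFinset.card : ℝ) - 4 * (maxCut G : ℝ)) ∧
    ∀ θ : V → ℝ, -(2 * (G.edgeFinset.card : ℝ)) ≤ energy G θ := by
  obtain ⟨S, hS⟩ := exists_eBtw_eq_maxCut G
  refine ⟨⟨⟨_, by rw [energy_antipodal, hS]⟩, ?_⟩, fun θ ↦ ?_⟩
  · rintro _ ⟨θ, rfl⟩
    exact sub_le_energy G θ
  · have hcut : (maxCut G : ℝ) ≤ #G.edgeFinset := by exact_mod_cast maxCut_le_card_edgeFinset G
    linarith [sub_le_energy G θ]
end

section
/- Let G=(V,E) be a finite simple graph, V = A ∪ B a partition, and suppose every vertex v ∈ V with odd degree satisfies: if v ∈ A then d_B(v) ≥ d_A(v), and if v ∈ B then d_A(v) ≥ d_B(v); assume additionally all degrees are odd (so all inequalities are strict). Then #E(A,B) ≥ |E|/2 + (|A|+|B|)/4. -/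
open Finset

variable {V : Type*} [Fintype V] [DecidableEq V]

/- Parity turns each hypothesis into `d_A(a) + 1 ≤ d_B(a)` (resp. `d_B(b) + 1 ≤ d_A(b)`); summing
over `A` and `B`, the left-hand sides add up to `2|E| - 2 e(A,B) + |A| + |B|` by the handshake
lemma, and the right-hand sides to `2 e(A,B)`, since every crossing edge is counted once from
each side. -/

section

variable (G : SimpleGraph V) [DecidableRel G.Adj]

lemma degree_eq_degIn_add_degIn {S T : Finset V} (hST : Disjoint S T) (hU : S ∪ T = univ)
    (v : V) : G.degree v = degIn G v S + degIn G v T := by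
  rw [degIn, degIn, ← card_union_of_disjoint (disjoint_filter_filter hST), ← filter_union, hU,
    ← SimpleGraph.neighborFinset_eq_filter]
  rfl

lemma degIn_lt_of_odd_degree {S T : Finset V} (hST : Disjoint S T) (hU : S ∪ T = univ) {v : V}
    (hodd : Odd (G.degree v)) (hle : degIn G v S ≤ degIn G v T) : degIn G v S < degIn G v T := by
  rw [degree_eq_degIn_add_degIn G hST hU, Nat.odd_iff] at hodd
  omega

lemma sum_degIn_add_card_le {S T : Finset V} (hST : Disjoint S T) (hU : S ∪ T = univ)
    (hodd : ∀ v ∈ S, Odd (G.degree v)) (hle : ∀ v ∈ S, degIn G v S ≤ degIn G v T) :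
    ∑ v ∈ S, degIn G v S + #S ≤ ∑ v ∈ S, degIn G v T := by
  have hlt v (hv : v ∈ S) : degIn G v S + 1 ≤ degIn G v T :=
    degIn_lt_of_odd_degree G hST hU (hodd v hv) (hle v hv)
  simpa [sum_add_distrib] using sum_le_sum hlt

lemma sum_degIn_eq_eBtw {X Y : Finset V} (hXY : Disjoint X Y) :
    ∑ x ∈ X, degIn G x Y = eBtw G X Y := by
  have hdarts : ∑ x ∈ X, degIn G x Y = #((X ×ˢ Y).filter fun p => G.Adj p.1 p.2) := by
    simp only [degIn, card_filter, sum_product]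
  rw [hdarts, eBtw]
  apply card_bij (fun p _ => s(p.1, p.2))
  · rintro ⟨x, y⟩ h
    simp only [mem_filter, mem_product] at h
    exact mem_filter.2 ⟨G.mem_edgeFinset.2 h.2, x, h.1.1, y, h.1.2, rfl⟩
  · rintro ⟨x, y⟩ h ⟨x', y'⟩ h' heq
    simp only [mem_filter, mem_product] at h h'
    rcases Sym2.eq_iff.1 heq with ⟨rfl, rfl⟩ | ⟨rfl, rfl⟩
    · rfl
    · exact (disjoint_left.1 hXY h.1.1 h'.1.2).elim
  · intro e he
    obtain ⟨hadj, x, hx, y, hy, rfl⟩ := by simpa using he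
    exact ⟨(x, y), by simpa [hx, hy] using hadj, rfl⟩

lemma two_mul_card_edgeFinset_eq_sum_degIn {S T : Finset V} (hST : Disjoint S T)
    (hU : S ∪ T = univ) :
    2 * #G.edgeFinset = ∑ v ∈ S, degIn G v S + ∑ v ∈ S, degIn G v T
      + (∑ v ∈ T, degIn G v S + ∑ v ∈ T, degIn G v T) := by
  rw [← G.sum_degrees_eq_twice_card_edges, ← hU, sum_union hST]
  simp only [degree_eq_degIn_add_degIn G hST hU, sum_add_distrib]

end

theorem external_partition_cut_bound (G : SimpleGraph V) [DecidableRel G.Adj]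
    (A B : Finset V)
    (hU : A ∪ B = Finset.univ) (hAB : Disjoint A B)
    (hodd : ∀ v : V, Odd (G.degree v))
    (hA : ∀ a ∈ A, degIn G a A ≤ degIn G a B)
    (hB : ∀ b ∈ B, degIn G b B ≤ degIn G b A) :
    (G.edgeFinset.card : ℚ) / 2 + ((A.card : ℚ) + B.card) / 4 ≤ eBtw G A B := by
  have hBA : Disjoint B A := hAB.symm
  have hUBA : B ∪ A = univ := union_comm A B ▸ hU
  have hsumA := sum_degIn_add_card_le G hAB hU (fun v _ => hodd v) hA
  have hsumB := sum_degIn_add_card_le G hBA hUBA (fun v _ => hodd v) hB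
  have hedges := two_mul_card_edgeFinset_eq_sum_degIn G hAB hU
  have hcrossA := sum_degIn_eq_eBtw G hAB
  have hcrossB := sum_degIn_eq_eBtw G hBA
  rw [eBtw_comm] at hcrossB
  have key : 2 * #G.edgeFinset + #A + #B ≤ 4 * eBtw G A B := by omega
  have hkey : (2 * #G.edgeFinset + #A + #B : ℚ) ≤ 4 * eBtw G A B := by exact_mod_cast key
  linarith
end

section
/- Let G=(V,E) be a finite simple connected graph with maximum degree Δ such that every vertex has odd degree. Then there is a partition V = A ∪ B with #E(A,B) ≥ (1/2 + 1/(3Δ))·|E|. -/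
open Finset

variable {V : Type*} [Fintype V] [DecidableEq V]

/-! Take a maximum cut `(A, Aᶜ)`. Moving one vertex across cannot enlarge it, so every vertex has
at least as many neighbours on the other side as on its own; as its degree is odd, strictly more.
Summing over `A` and over `Aᶜ` gives `2 e(A) + |A| ≤ e(A, Aᶜ)` and `2 e(Aᶜ) + |Aᶜ| ≤ e(A, Aᶜ)`,
hence `2 |E| + |V| ≤ 4 e(A, Aᶜ)`, while `2 |E| ≤ Δ |V|` by the handshake lemma. -/

lemma half_add_one_div_three_mul_le {m n c Δ : ℕ} (hc : 2 * m + n ≤ 4 * c)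
    (hΔ : 2 * m ≤ Δ * n) : ((1 : ℚ) / 2 + 1 / (3 * Δ)) * m ≤ c := by
  rcases Nat.eq_zero_or_pos Δ with rfl | hΔpos
  · obtain rfl : m = 0 := by omega
    simp
  have hc' : (2 * m + n : ℚ) ≤ 4 * c := by exact_mod_cast hc
  have hm : 1 / (3 * Δ : ℚ) * m ≤ n / 6 := by
    have hΔ' : (2 * m : ℚ) ≤ Δ * n := by exact_mod_cast hΔ
    rw [div_mul_eq_mul_div, div_le_iff₀ (by positivity)]
    linarith
  have : (0 : ℚ) ≤ n := n.cast_nonneg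
  linarith

namespace SimpleGraph

variable (G : SimpleGraph V) [DecidableRel G.Adj]

lemma eBtw_eq_sum_degIn {X Y : Finset V} (hXY : Disjoint X Y) :
    eBtw G X Y = ∑ v ∈ X, degIn G v Y := by
  have hpairs : ∑ v ∈ X, degIn G v Y = #((X ×ˢ Y).filter fun p => G.Adj p.1 p.2) := by
    rw [card_filter, sum_product]
    simp only [degIn, card_filter]
  rw [hpairs, eBtw, ← card_image_of_injOn (f := fun p : V × V => s(p.1, p.2))]
  · congr 1
    ext e
    simp only [mem_image, mem_filter, mem_product, mem_edgeFinset, Prod.exists]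
    constructor
    · rintro ⟨he, x, hx, y, hy, rfl⟩
      exact ⟨x, y, ⟨⟨hx, hy⟩, he⟩, rfl⟩
    · rintro ⟨x, y, ⟨⟨hx, hy⟩, hxy⟩, rfl⟩
      exact ⟨hxy, x, hx, y, hy, rfl⟩
  · rintro ⟨x, y⟩ hp ⟨x', y'⟩ hp' h
    simp only [coe_filter, mem_product, Set.mem_ofPred_eq] at hp hp'
    rcases Sym2.eq_iff.mp h with ⟨rfl, rfl⟩ | ⟨rfl, rfl⟩
    · rfl
    · exact absurd hp'.1.2 (Finset.disjoint_left.mp hXY hp.1.1)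

lemma eBtw_compl_eq_sum (S : Finset V) : eBtw G S Sᶜ = ∑ v ∈ S, degIn G v Sᶜ :=
  G.eBtw_eq_sum_degIn disjoint_compl_right

lemma eBtw_compl_compl (S : Finset V) : eBtw G Sᶜ Sᶜᶜ = eBtw G S Sᶜ := by
  rw [eBtw_compl_eq_sum, eBtw_compl_eq_sum, compl_compl]
  simp only [degIn, card_filter]
  rw [sum_comm]
  simp only [G.adj_comm]

lemma degIn_add_degIn_compl (v : V) (S : Finset V) :
    degIn G v S + degIn G v Sᶜ = G.degree v := by
  rw [degIn, degIn, ← card_union_of_disjoint (disjoint_filter_filter disjoint_compl_right),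
    ← filter_union, union_compl, ← neighborFinset_eq_filter, card_neighborFinset_eq_degree]

lemma two_mul_card_edgeFinset_eq (S : Finset V) :
    2 * #G.edgeFinset = ∑ v ∈ S, degIn G v S + ∑ v ∈ Sᶜ, degIn G v Sᶜ + 2 * eBtw G S Sᶜ := by
  have hcut : eBtw G S Sᶜ = ∑ v ∈ Sᶜ, degIn G v S := by
    rw [← eBtw_compl_compl, eBtw_compl_eq_sum, compl_compl]
  rw [← sum_degrees_eq_twice_card_edges, ← sum_add_sum_compl S]
  simp only [← degIn_add_degIn_compl G _ S, sum_add_distrib]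
  nth_rewrite 1 [two_mul, eBtw_compl_eq_sum]
  rw [hcut]
  ring

lemma eBtw_erase_add_degIn_compl {S : Finset V} {v : V} (hv : v ∈ S) :
    eBtw G (S.erase v) (S.erase v)ᶜ + degIn G v Sᶜ = eBtw G S Sᶜ + degIn G v S := by
  have hcompl : (S.erase v)ᶜ = insert v Sᶜ := by
    rw [← compl_inj_iff, compl_compl, compl_insert, compl_compl]
  have hdegIn : ∀ u, degIn G u (insert v Sᶜ) = degIn G u Sᶜ + if G.Adj v u then 1 else 0 := by
    intro u
    by_cases h : G.Adj v u
    · rw [degIn, degIn, filter_insert, if_pos h.symm, if_pos h,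
        card_insert_of_notMem (by simp [hv])]
    · rw [degIn, degIn, filter_insert, if_neg (mt G.adj_symm h), if_neg h, add_zero]
  have hself : degIn G v S = ∑ u ∈ S.erase v, if G.Adj v u then 1 else 0 := by
    rw [← card_filter, degIn, filter_erase, erase_eq_of_notMem (by simp)]
  rw [eBtw_compl_eq_sum, eBtw_compl_eq_sum, hcompl, ← add_sum_erase _ _ hv, hself]
  simp only [hdegIn, sum_add_distrib]
  ring

def IsMaxCut (S : Finset V) : Prop := ∀ T : Finset V, eBtw G T Tᶜ ≤ eBtw G S Sᶜ

lemma exists_isMaxCut : ∃ S, G.IsMaxCut S := by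
  obtain ⟨S, -, hS⟩ := exists_max_image univ (fun S : Finset V => eBtw G S Sᶜ) univ_nonempty
  exact ⟨S, fun T => hS T (mem_univ T)⟩

variable {G}

lemma IsMaxCut.compl {S : Finset V} (hS : G.IsMaxCut S) : G.IsMaxCut Sᶜ := by
  intro T
  rw [eBtw_compl_compl]
  exact hS T

lemma IsMaxCut.degIn_le {S : Finset V} (hS : G.IsMaxCut S) {v : V} (hv : v ∈ S) :
    degIn G v S ≤ degIn G v Sᶜ := by
  have := G.eBtw_erase_add_degIn_compl hv
  have := hS (S.erase v)
  omega

lemma IsMaxCut.degIn_lt {S : Finset V} (hS : G.IsMaxCut S) {v : V} (hv : v ∈ S)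
    (hodd : Odd (G.degree v)) : degIn G v S < degIn G v Sᶜ := by
  have := hS.degIn_le hv
  have := G.degIn_add_degIn_compl v S
  obtain ⟨k, hk⟩ := hodd
  omega

lemma IsMaxCut.sum_degIn_add_card_le {S : Finset V} (hS : G.IsMaxCut S)
    (hodd : ∀ v, Odd (G.degree v)) : ∑ v ∈ S, degIn G v S + #S ≤ eBtw G S Sᶜ := by
  rw [eBtw_compl_eq_sum, card_eq_sum_ones, ← sum_add_distrib]
  exact sum_le_sum fun v hv => hS.degIn_lt hv (hodd v)

lemma IsMaxCut.two_mul_card_edgeFinset_add_card_le {S : Finset V} (hS : G.IsMaxCut S)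
    (hodd : ∀ v, Odd (G.degree v)) : 2 * #G.edgeFinset + Fintype.card V ≤ 4 * eBtw G S Sᶜ := by
  have hS' := hS.sum_degIn_add_card_le hodd
  have hSc := hS.compl.sum_degIn_add_card_le hodd
  rw [eBtw_compl_compl] at hSc
  have := G.two_mul_card_edgeFinset_eq S
  have := card_add_card_compl S
  omega

end SimpleGraph

theorem odd_degree_judicious_partition_general (G : SimpleGraph V) [DecidableRel G.Adj]
    (hodd : ∀ v : V, Odd (G.degree v)) :
    ∃ A B : Finset V, A ∪ B = Finset.univ ∧ Disjoint A B ∧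
      ((1 : ℚ) / 2 + 1 / (3 * G.maxDegree)) * G.edgeFinset.card ≤ eBtw G A B := by
  obtain ⟨A, hA⟩ := G.exists_isMaxCut
  have hhandshake : 2 * #G.edgeFinset ≤ G.maxDegree * Fintype.card V := by
    rw [← G.sum_degrees_eq_twice_card_edges, mul_comm, ← smul_eq_mul, ← card_univ, ← sum_const]
    exact sum_le_sum fun v _ => G.degree_le_maxDegree v
  exact ⟨A, Aᶜ, union_compl A, disjoint_compl_right,
    half_add_one_div_three_mul_le (hA.two_mul_card_edgeFinset_add_card_le hodd) hhandshake⟩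

theorem odd_degree_judicious_partition (G : SimpleGraph V) [DecidableRel G.Adj]
    (hconn : G.Connected) (hΔ : 1 ≤ G.maxDegree)
    (hodd : ∀ v : V, Odd (G.degree v)) :
    ∃ A B : Finset V, A ∪ B = Finset.univ ∧ Disjoint A B ∧
      ((1 : ℚ) / 2 + 1 / (3 * G.maxDegree)) * G.edgeFinset.card ≤ eBtw G A B :=
  odd_degree_judicious_partition_general G hodd
end
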